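/- Let d ≥ 2. Suppose ρ is a d×d bipartite quantum state and {A_x}_{x=1}^{2d}, {B_y}_{y=1}^{2d} are POVMs with 2d outcomes on each side such that tr(ρ·(A_x ⊗ B_y)) = P_{xy} for all x,y ∈ [2d]. Then every measurement operator A_x and B_y (x,y ∈ [2d]) has rank exactly 1. -/

import Mathlib

open Matrix Kronecker ComplexOrder

/-- The correlation `P` that semi-self-tests the maximally entangled state, as a `2d × 2d`
matrix indexed by `Fin d ⊕ Fin d` (with `Sum.inl x` the outcome `x ∈ [d]` and `Sum.inr x`
the outcome `d + x`), given in block form by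
`P = (1/(d(d+1)²)) · [[d²·I_d, J_d], [J_d, I_d]]`. -/
noncomputable def Pmat (d : ℕ) : Matrix (Fin d ⊕ Fin d) (Fin d ⊕ Fin d) ℝ :=
  fun x y =>
    (1 / (d * (d + 1) ^ 2)) *
      match x, y with
      | Sum.inl i, Sum.inl j => if i = j then (d : ℝ) ^ 2 else 0
      | Sum.inl _, Sum.inr _ => 1
      | Sum.inr _, Sum.inl _ => 1
      | Sum.inr i, Sum.inr j => if i = j then 1 else 0

/-!
Within each diagonal block of `P` the correlation is perfect: `tr(ρ (A_j ⊗ B_l)) = 0` exactly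
when `j ≠ l`. For positive semidefinite `X, Y` a vanishing `tr(XY)` forces `XY = 0`, so
`(A_j ⊗ B_l) ρ = 0` for `j ≠ l` while `(A_j ⊗ B_j) ρ ≠ 0`. Slicing `(A_j ⊗ 1) ρ` then gives
vectors `u_j ∈ ℂ^d` with `B_l u_j = 0` for `l ≠ j` and `B_j u_j ≠ 0`. These `d` vectors are
linearly independent, so each `B_i` is nonzero and kills a `(d-1)`-dimensional subspace, i.e. has
rank one; exchanging the tensor factors gives the same for `A`.
-/

open Module Fintype

namespace Matrix

open scoped MatrixOrder in
theorem PosSemidef.mul_eq_zero_of_trace_mul_eq_zero {𝕜 n : Type*} [RCLike 𝕜] [Fintype n]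
    [DecidableEq n] {A B : Matrix n n 𝕜} (hA : A.PosSemidef) (hB : B.PosSemidef)
    (h : (A * B).trace = 0) : A * B = 0 := by
  obtain ⟨a, rfl⟩ := CStarAlgebra.nonneg_iff_eq_star_mul_self.mp hA.nonneg
  obtain ⟨b, rfl⟩ := CStarAlgebra.nonneg_iff_eq_star_mul_self.mp hB.nonneg
  rw [star_eq_conjTranspose, star_eq_conjTranspose] at h ⊢
  -- `tr(aᴴa bᴴb) = tr((baᴴ)ᴴ (baᴴ))`
  have hba : b * aᴴ = 0 := by
    rw [← trace_conjTranspose_mul_self_eq_zero_iff, ← h, conjTranspose_mul,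
      conjTranspose_conjTranspose, ← Matrix.mul_assoc, trace_mul_comm]
    simp only [Matrix.mul_assoc]
  calc aᴴ * a * (bᴴ * b) = aᴴ * (b * aᴴ)ᴴ * b := by
        simp only [conjTranspose_mul, conjTranspose_conjTranspose, Matrix.mul_assoc]
    _ = 0 := by rw [hba, conjTranspose_zero, Matrix.mul_zero, Matrix.zero_mul]

section RankOne

variable {K ι n : Type*} [Field K] [Fintype ι] [Fintype n] {b : ι → Matrix n n K}
  {u : ι → n → K}

theorem linearIndependent_of_mulVec_eq_zero_of_ne
    (hzero : ∀ l j, l ≠ j → b l *ᵥ u j = 0) (hne : ∀ j, b j *ᵥ u j ≠ 0) :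
    LinearIndependent K u := by
  classical
  rw [Fintype.linearIndependent_iff]
  intro g hg l
  have hl := congrArg (b l *ᵥ ·) hg
  simp only [mulVec_sum, mulVec_smul, mulVec_zero] at hl
  rw [Finset.sum_eq_single l (fun j _ hjl => by rw [hzero l j hjl.symm, smul_zero])
    (fun h => absurd (Finset.mem_univ l) h)] at hl
  exact (smul_eq_zero.mp hl).resolve_right (hne l)

theorem rank_eq_one_of_mulVec_eq_zero_of_ne (hcard : card ι = card n)
    (hzero : ∀ l j, l ≠ j → b l *ᵥ u j = 0) (hne : ∀ j, b j *ᵥ u j ≠ 0) (i : ι) :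
    (b i).rank = 1 := by
  classical
  have hli := linearIndependent_of_mulVec_eq_zero_of_ne hzero hne
  have hker : card ι - 1 ≤ finrank K (LinearMap.ker (b i).mulVecLin) := by
    let v : {j // j ≠ i} → LinearMap.ker (b i).mulVecLin :=
      fun j => ⟨u j, hzero i j (Ne.symm j.2)⟩
    have hv : LinearIndependent K v :=
      .of_comp (LinearMap.ker _).subtype (hli.comp _ Subtype.val_injective)
    simpa [Fintype.card_subtype_compl] using hv.fintype_card_le_finrank
  have hrank : (b i).rank ≠ 0 := fun h0 =>
    hne i <| (Submodule.mem_bot K).mp <|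
      Submodule.finrank_eq_zero.mp h0 ▸ LinearMap.mem_range_self _ (u i)
  have hdim := LinearMap.finrank_range_add_finrank_ker (b i).mulVecLin
  rw [finrank_fintype_fun_eq_card] at hdim
  change (b i).rank + _ = _ at hdim
  omega

end RankOne

section Kronecker

variable {R K ι m n o : Type*} [Fintype ι] [Fintype m] [Fintype n]

theorem one_kronecker_mul_apply [CommSemiring R] [DecidableEq m] (b : Matrix n n R)
    (M : Matrix (m × n) o R) (p : m) (k : n) (c : o) :
    (((1 : Matrix m m R) ⊗ₖ b) * M) (p, k) c = (b *ᵥ fun k' => M (p, k') c) k := by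
  simp [mul_apply, mulVec, dotProduct, Fintype.sum_prod_type, one_apply]

theorem kronecker_one_mul_apply [CommSemiring R] [DecidableEq n] (a : Matrix m m R)
    (M : Matrix (m × n) o R) (p : m) (k : n) (c : o) :
    ((a ⊗ₖ (1 : Matrix n n R)) * M) (p, k) c = (a *ᵥ fun p' => M (p', k) c) p := by
  simp [mul_apply, mulVec, dotProduct, Fintype.sum_prod_type, one_apply]

variable [DecidableEq m] [DecidableEq n] [Field K] {ρ : Matrix (m × n) o K}
  {a : ι → Matrix m m K} {b : ι → Matrix n n K}

theorem rank_eq_one_right_of_kronecker_mul (hcard : card ι = card n)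
    (hzero : ∀ j l, j ≠ l → (a j ⊗ₖ b l) * ρ = 0) (hne : ∀ j, (a j ⊗ₖ b j) * ρ ≠ 0) (i : ι) :
    (b i).rank = 1 := by
  have hcol : ∀ j, ∃ p c, (fun k => ((a j ⊗ₖ b j) * ρ) (p, k) c) ≠ 0 := by
    intro j
    by_contra! h
    exact hne j (by ext ⟨p, k⟩ c; exact congrFun (h p c) k)
  choose p c hpc using hcol
  let u : ι → n → K := fun j k => ((a j ⊗ₖ (1 : Matrix n n K)) * ρ) (p j, k) (c j)
  have key : ∀ l j, b l *ᵥ u j = fun k => ((a j ⊗ₖ b l) * ρ) (p j, k) (c j) := by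
    intro l j
    ext k
    rw [← one_kronecker_mul_apply, ← Matrix.mul_assoc, ← mul_kronecker_mul, Matrix.one_mul,
      Matrix.mul_one]
  refine rank_eq_one_of_mulVec_eq_zero_of_ne (u := u) hcard (fun l j hlj => ?_) (fun j => ?_) i
  · rw [key, hzero j l hlj.symm]
    rfl
  · rw [key]
    exact hpc j

theorem rank_eq_one_left_of_kronecker_mul (hcard : card ι = card m)
    (hzero : ∀ j l, j ≠ l → (a j ⊗ₖ b l) * ρ = 0) (hne : ∀ j, (a j ⊗ₖ b j) * ρ ≠ 0) (i : ι) :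
    (a i).rank = 1 := by
  have hcol : ∀ j, ∃ k c, (fun p => ((a j ⊗ₖ b j) * ρ) (p, k) c) ≠ 0 := by
    intro j
    by_contra! h
    exact hne j (by ext ⟨p, k⟩ c; exact congrFun (h k c) p)
  choose k c hkc using hcol
  let u : ι → m → K := fun j p => (((1 : Matrix m m K) ⊗ₖ b j) * ρ) (p, k j) (c j)
  have key : ∀ l j, a l *ᵥ u j = fun p => ((a l ⊗ₖ b j) * ρ) (p, k j) (c j) := by
    intro l j
    ext p
    rw [← kronecker_one_mul_apply, ← Matrix.mul_assoc, ← mul_kronecker_mul, Matrix.one_mul,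
      Matrix.mul_one]
  refine rank_eq_one_of_mulVec_eq_zero_of_ne (u := u) hcard (fun l j hlj => ?_) (fun j => ?_) i
  · rw [key, hzero l j hlj]
    rfl
  · rw [key]
    exact hkc j

end Kronecker

theorem rank_eq_one_of_trace_mul_kronecker_eq_zero_iff {𝕜 ι m n : Type*} [RCLike 𝕜]
    [Fintype ι] [Fintype m] [Fintype n] [DecidableEq m] [DecidableEq n]
    (hm : card ι = card m) (hn : card ι = card n) {ρ : Matrix (m × n) (m × n) 𝕜}
    {a : ι → Matrix m m 𝕜} {b : ι → Matrix n n 𝕜} (hρ : ρ.PosSemidef)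
    (ha : ∀ j, (a j).PosSemidef) (hb : ∀ l, (b l).PosSemidef)
    (h : ∀ j l, (ρ * (a j ⊗ₖ b l)).trace = 0 ↔ j ≠ l) :
    (∀ i, (a i).rank = 1) ∧ ∀ i, (b i).rank = 1 := by
  have hzero : ∀ j l, j ≠ l → (a j ⊗ₖ b l) * ρ = 0 := fun j l hjl =>
    ((ha j).kronecker (hb l)).mul_eq_zero_of_trace_mul_eq_zero hρ
      (by rw [trace_mul_comm]; exact (h j l).2 hjl)
  have hne : ∀ j, (a j ⊗ₖ b j) * ρ ≠ 0 := fun j hj =>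
    (h j j).1 (by rw [trace_mul_comm, hj, trace_zero]) rfl
  exact ⟨rank_eq_one_left_of_kronecker_mul hm hzero hne,
    rank_eq_one_right_of_kronecker_mul hn hzero hne⟩

end Matrix

theorem Pmat_inl_inl_eq_zero_iff {d : ℕ} (i j : Fin d) :
    Pmat d (.inl i) (.inl j) = 0 ↔ i ≠ j := by
  have : (0 : ℝ) < d := by exact_mod_cast i.pos
  by_cases hij : i = j <;> simp [Pmat, hij, this.ne', (by positivity : (d : ℝ) + 1 ≠ 0)]

theorem Pmat_inr_inr_eq_zero_iff {d : ℕ} (i j : Fin d) :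
    Pmat d (.inr i) (.inr j) = 0 ↔ i ≠ j := by
  have : (0 : ℝ) < d := by exact_mod_cast i.pos
  by_cases hij : i = j <;> simp [Pmat, hij, this.ne', (by positivity : (d : ℝ) + 1 ≠ 0)]

theorem stmt6_general (d : ℕ)
    (ρ : Matrix (Fin d × Fin d) (Fin d × Fin d) ℂ)
    (hρ : ρ.PosSemidef)
    (A B : Fin d ⊕ Fin d → Matrix (Fin d) (Fin d) ℂ)
    (hA : ∀ x, (A x).PosSemidef) (hB : ∀ y, (B y).PosSemidef)
    (hcorr : ∀ x y, (ρ * (A x ⊗ₖ B y)).trace = (Pmat d x y : ℂ)) :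
    (∀ x, (A x).rank = 1) ∧ (∀ y, (B y).rank = 1) := by
  have hblock (e : Fin d → Fin d ⊕ Fin d) (he : ∀ j l, Pmat d (e j) (e l) = 0 ↔ j ≠ l) :
      (∀ i, (A (e i)).rank = 1) ∧ ∀ i, (B (e i)).rank = 1 :=
    rank_eq_one_of_trace_mul_kronecker_eq_zero_iff rfl rfl hρ (fun _ => hA _) (fun _ => hB _)
      fun j l => by rw [hcorr, Complex.ofReal_eq_zero, he]
  obtain ⟨hAl, hBl⟩ := hblock Sum.inl Pmat_inl_inl_eq_zero_iff
  obtain ⟨hAr, hBr⟩ := hblock Sum.inr Pmat_inr_inr_eq_zero_iff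
  exact ⟨Sum.rec hAl hAr, Sum.rec hBl hBr⟩

/-- if a `d × d` bipartite quantum state `ρ` together with POVMs
`{A_x}`, `{B_y}` (`2d` outcomes each) generates the correlation `P`, then every measurement
operator `A_x` and `B_y` has rank exactly 1. -/
theorem stmt6 (d : ℕ) (hd : 2 ≤ d)
    (ρ : Matrix (Fin d × Fin d) (Fin d × Fin d) ℂ)
    (hρ : ρ.PosSemidef) (hρtr : ρ.trace = 1)
    (A B : Fin d ⊕ Fin d → Matrix (Fin d) (Fin d) ℂ)
    (hA : ∀ x, (A x).PosSemidef) (hB : ∀ y, (B y).PosSemidef)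
    (hAsum : (∑ x, A x) = 1) (hBsum : (∑ y, B y) = 1)
    (hcorr : ∀ x y, (ρ * (A x ⊗ₖ B y)).trace = (Pmat d x y : ℂ)) :
    (∀ x, (A x).rank = 1) ∧ (∀ y, (B y).rank = 1) :=
  stmt6_general d ρ hρ A B hA hB hcorr
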